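/- arXiv:1504.06943 — 3 statements merged into one kernel-verified Lean document; each statement's English description precedes it below -/
import Mathlib

section
/- Let D₁, D₂ be finite sets, X₁, X₂, Z₁, Z₂ finite-dimensional complex inner product spaces, and A = (A_{xy}), Δ = (Δ_{xy}) families of linear maps as in the definition of the relative γ₂-norm. If A_{xy} = 0 for every pair (x,y) with Δ_{xy} = 0, then γ₂(A|Δ) is finite; moreover γ₂(A|Δ) ≤ Σ_{x∈D₁, y∈D₂} ‖A_{xy}‖_tr / ‖Δ_{xy}‖, where ‖·‖_tr is the trace norm (sum of singular values), ‖·‖ is the operator norm, and a summand with Δ_{xy} = 0 (hence A_{xy} = 0) is taken to be 0. -/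
/-!
Write each `A_{xy} = ∑ᵢ sᵢ |eᵢ⟩⟨vᵢ|` with `vᵢ` an eigenbasis of `|A_{xy}| = √(A_{xy}* A_{xy})`, so
that `sᵢ = ‖A_{xy} vᵢ‖` are the singular values and `∑ᵢ sᵢ = ‖A_{xy}‖_tr`, and choose unit
vectors `u`, `w` with `⟪w, Δ_{xy} u⟫ = ‖Δ_{xy}‖`. With `cᵢ = √(sᵢ / ‖Δ_{xy}‖)`, the rank-one maps
`cᵢ |w⟩⟨eᵢ|` and `cᵢ |u⟩⟨vᵢ|` factor `A_{xy} = ∑ᵢ (cᵢ |w⟩⟨eᵢ|)* Δ_{xy} (cᵢ |u⟩⟨vᵢ|)`.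
Stacking all these maps over the index set `D₁ × D₂ × Fin n` (the maps for `(x', y', i)` are
put into `Υ_x` only when `x' = x`, into `Φ_y` only when `y' = y`) gives a factorization of the
whole family in which `‖Υ_x‖²` and `‖Φ_y‖²` are bounded by `∑_{x,y} ‖A_{xy}‖_tr / ‖Δ_{xy}‖`.
-/

noncomputable section

open scoped ENNReal ComplexOrder

/-- A linear endomorphism of a finite-dimensional complex inner product space is unitary. -/
def IsUnitaryMap {E : Type*} [NormedAddCommGroup E] [InnerProductSpace ℂ E]
    [FiniteDimensional ℂ E] (f : E →ₗ[ℂ] E) : Prop :=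
  LinearMap.adjoint f ∘ₗ f = LinearMap.id ∧ f ∘ₗ LinearMap.adjoint f = LinearMap.id

/-- Operator norm of a linear map between finite-dimensional inner product spaces. -/
noncomputable def opNorm {E F : Type*} [NormedAddCommGroup E] [InnerProductSpace ℂ E]
    [NormedAddCommGroup F] [InnerProductSpace ℂ F] [FiniteDimensional ℂ E]
    (f : E →ₗ[ℂ] F) : ℝ :=
  ‖LinearMap.toContinuousLinearMap f‖

/-- A complex scalar viewed as a linear map `ℂ → ℂ`. -/
noncomputable def scalarMap (c : ℂ) : ℂ →ₗ[ℂ] ℂ := c • LinearMap.id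

/-- The block-diagonal map `⊕ᵢ Δᵢ` on an `ℓ²`-direct sum of copies of a space. -/
noncomputable def piBlock {ι : Type*} [Fintype ι] {X₁ X₂ : Type*}
    [NormedAddCommGroup X₁] [InnerProductSpace ℂ X₁]
    [NormedAddCommGroup X₂] [InnerProductSpace ℂ X₂]
    (Δ : ι → (X₂ →ₗ[ℂ] X₁)) :
    PiLp 2 (fun _ : ι => X₂) →ₗ[ℂ] PiLp 2 (fun _ : ι => X₁) :=
  (WithLp.linearEquiv 2 ℂ (∀ _ : ι, X₁)).symm.toLinearMap ∘ₗ
    (LinearMap.pi fun i => Δ i ∘ₗ LinearMap.proj i) ∘ₗ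
      (WithLp.linearEquiv 2 ℂ (∀ _ : ι, X₂)).toLinearMap

/-- The relative `γ₂`-norm `γ₂(A | Δ)` of a family `A = (A_{xy} : Z₂ → Z₁)` relative to a
family `Δ = (Δ_{xy} : X₂ → X₁)`: the infimum over `k ∈ ℕ` and factorizations
`A_{xy} = Υ_x* ∘ (Δ_{xy} ⊗ id_{ℂᵏ}) ∘ Φ_y` of `max (max_x ‖Υ_x‖²) (max_y ‖Φ_y‖²)`,
where `X ⊗ ℂᵏ` is realized as the `ℓ²`-direct sum of `k` copies of `X`.
The infimum of the empty set is `+∞`. -/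
noncomputable def relGamma2 {D₁ D₂ : Type*} [Fintype D₁] [Fintype D₂]
    {X₁ X₂ Z₁ Z₂ : Type*}
    [NormedAddCommGroup X₁] [InnerProductSpace ℂ X₁] [FiniteDimensional ℂ X₁]
    [NormedAddCommGroup X₂] [InnerProductSpace ℂ X₂] [FiniteDimensional ℂ X₂]
    [NormedAddCommGroup Z₁] [InnerProductSpace ℂ Z₁] [FiniteDimensional ℂ Z₁]
    [NormedAddCommGroup Z₂] [InnerProductSpace ℂ Z₂] [FiniteDimensional ℂ Z₂]
    (A : D₁ → D₂ → (Z₂ →ₗ[ℂ] Z₁)) (Δ : D₁ → D₂ → (X₂ →ₗ[ℂ] X₁)) : ℝ≥0∞ :=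
  ⨅ (k : ℕ) (Υ : D₁ → (Z₁ →ₗ[ℂ] PiLp 2 (fun _ : Fin k => X₁)))
    (Φ : D₂ → (Z₂ →ₗ[ℂ] PiLp 2 (fun _ : Fin k => X₂)))
    (_ : ∀ x y, A x y =
      LinearMap.adjoint (Υ x) ∘ₗ piBlock (fun _ : Fin k => Δ x y) ∘ₗ Φ y),
    (⨆ x, ENNReal.ofReal (opNorm (Υ x) ^ 2)) ⊔ (⨆ y, ENNReal.ofReal (opNorm (Φ y) ^ 2))

/-- Trace norm (sum of singular values) of a linear map between finite-dimensional
complex inner product spaces, computed as the trace of `√(AᴴA)` in matrix form. -/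
noncomputable def traceNorm {E F : Type*} [NormedAddCommGroup E] [InnerProductSpace ℂ E]
    [NormedAddCommGroup F] [InnerProductSpace ℂ F] [FiniteDimensional ℂ E]
    [FiniteDimensional ℂ F] (f : E →ₗ[ℂ] F) : ℝ :=
  (let hA := Matrix.posSemidef_conjTranspose_mul_self
      (LinearMap.toMatrix (stdOrthonormalBasis ℂ E).toBasis
        (stdOrthonormalBasis ℂ F).toBasis f);
    ((hA.1.eigenvectorUnitary.1 *
        Matrix.diagonal (fun i => ((Real.sqrt (hA.1.eigenvalues i) : ℝ) : ℂ)) *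
        (star hA.1.eigenvectorUnitary : Matrix _ _ ℂ)).trace)).re

open scoped InnerProductSpace

section TraceNorm

variable {E F : Type*} [NormedAddCommGroup E] [InnerProductSpace ℂ E] [FiniteDimensional ℂ E]
  [NormedAddCommGroup F] [InnerProductSpace ℂ F] [FiniteDimensional ℂ F]

open scoped MatrixOrder in
theorem traceNorm_eq_re_trace_sqrt (f : E →ₗ[ℂ] F) :
    traceNorm f = (CFC.sqrt (LinearMap.toMatrix (stdOrthonormalBasis ℂ E).toBasis
      (stdOrthonormalBasis ℂ E).toBasis (LinearMap.adjoint f ∘ₗ f))).trace.re := by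
  have hM := Matrix.posSemidef_conjTranspose_mul_self (LinearMap.toMatrix
    (stdOrthonormalBasis ℂ E).toBasis (stdOrthonormalBasis ℂ F).toBasis f)
  rw [LinearMap.toMatrix_comp _ (stdOrthonormalBasis ℂ F).toBasis, LinearMap.toMatrix_adjoint,
    CFC.sqrt_eq_real_sqrt _ hM.nonneg, cfcₙ_eq_cfc, hM.1.cfc_eq]
  -- `traceNorm` is `Matrix.IsHermitian.cfc Real.sqrt` of `AᴴA` written out
  rfl

open scoped MatrixOrder in
theorem exists_isPositive_comp_self_eq_adjoint_comp_self_and_traceNorm_eq (f : E →ₗ[ℂ] F) :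
    ∃ g : E →ₗ[ℂ] E, g.IsPositive ∧ g ∘ₗ g = LinearMap.adjoint f ∘ₗ f ∧
      traceNorm f = RCLike.re (LinearMap.trace ℂ E g) := by
  set b := stdOrthonormalBasis ℂ E
  set M := LinearMap.toMatrix b.toBasis b.toBasis (LinearMap.adjoint f ∘ₗ f)
  have hM : 0 ≤ M := ((LinearMap.posSemidef_toMatrix_iff b).2
    (LinearMap.isPositive_adjoint_comp_self f)).nonneg
  refine ⟨(LinearMap.toMatrix b.toBasis b.toBasis).symm (CFC.sqrt M), ?_, ?_, ?_⟩
  · rw [← LinearMap.posSemidef_toMatrix_iff b, LinearEquiv.apply_symm_apply]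
    exact Matrix.nonneg_iff_posSemidef.mp (CFC.sqrt_nonneg M)
  · apply (LinearMap.toMatrix b.toBasis b.toBasis).injective
    rw [LinearMap.toMatrix_comp _ b.toBasis, LinearEquiv.apply_symm_apply,
      CFC.sqrt_mul_sqrt_self M hM]
  · rw [traceNorm_eq_re_trace_sqrt, LinearMap.trace_eq_matrix_trace ℂ b.toBasis,
      LinearEquiv.apply_symm_apply]
    rfl

theorem norm_apply_eq_of_comp_self_eq_adjoint_comp_self {f : E →ₗ[ℂ] F} {g : E →ₗ[ℂ] E}
    (hg : g.IsSymmetric) (hgf : g ∘ₗ g = LinearMap.adjoint f ∘ₗ f) (x : E) :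
    ‖f x‖ = ‖g x‖ := by
  have : ⟪f x, f x⟫_ℂ = ⟪g x, g x⟫_ℂ := by
    rw [hg, ← LinearMap.comp_apply, hgf, LinearMap.comp_apply, LinearMap.adjoint_inner_right]
  rw [← sq_eq_sq₀ (norm_nonneg _) (norm_nonneg _), ← inner_self_eq_norm_sq (𝕜 := ℂ),
    ← inner_self_eq_norm_sq (𝕜 := ℂ), this]

theorem exists_orthonormalBasis_traceNorm_eq_sum_norm_apply (f : E →ₗ[ℂ] F) :
    ∃ v : OrthonormalBasis (Fin (Module.finrank ℂ E)) ℂ E, traceNorm f = ∑ i, ‖f (v i)‖ := by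
  obtain ⟨g, hg, hgf, htr⟩ := exists_isPositive_comp_self_eq_adjoint_comp_self_and_traceNorm_eq f
  refine ⟨hg.isSymmetric.eigenvectorBasis rfl, ?_⟩
  rw [htr, hg.isSymmetric.re_trace_eq_sum_eigenvalues rfl]
  refine Finset.sum_congr rfl fun i _ => ?_
  rw [norm_apply_eq_of_comp_self_eq_adjoint_comp_self hg.isSymmetric hgf,
    hg.isSymmetric.apply_eigenvectorBasis, norm_smul, OrthonormalBasis.norm_eq_one, mul_one,
    RCLike.norm_ofReal, abs_of_nonneg (hg.nonneg_eigenvalues rfl i)]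

theorem traceNorm_nonneg (f : E →ₗ[ℂ] F) : 0 ≤ traceNorm f := by
  obtain ⟨v, hv⟩ := exists_orthonormalBasis_traceNorm_eq_sum_norm_apply f
  exact hv ▸ Finset.sum_nonneg fun i _ => norm_nonneg _

end TraceNorm

theorem ContinuousLinearMap.exists_norm_le_one_norm_apply_eq_opNorm {𝕜 E F : Type*}
    [DenselyNormedField 𝕜] [NormedAddCommGroup E] [NormedSpace 𝕜 E] [ProperSpace E]
    [NormedAddCommGroup F] [NormedSpace 𝕜 F] (T : E →L[𝕜] F) :
    ∃ u : E, ‖u‖ ≤ 1 ∧ ‖T u‖ = ‖T‖ := by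
  have := ((isCompact_closedBall (0 : E) 1).image T.continuous.norm).sSup_mem
    ((Metric.nonempty_closedBall.2 zero_le_one).image _)
  rw [T.sSup_unitClosedBall_eq_norm] at this
  obtain ⟨u, hu, hTu⟩ := this
  exact ⟨u, mem_closedBall_zero_iff.1 hu, hTu⟩

theorem exists_norm_le_one_inner_eq_norm {F : Type*} [NormedAddCommGroup F]
    [InnerProductSpace ℂ F] (y : F) :
    ∃ w : F, ‖w‖ ≤ 1 ∧ ⟪w, y⟫_ℂ = ‖y‖ ∧ (‖y‖ : ℂ) • w = y := by
  rcases eq_or_ne y 0 with rfl | hy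
  · exact ⟨0, by simp⟩
  have hy' : (‖y‖ : ℂ) ≠ 0 := by exact_mod_cast norm_ne_zero_iff.2 hy
  refine ⟨(‖y‖ : ℂ)⁻¹ • y, ?_, ?_, by rw [smul_smul, mul_inv_cancel₀ hy', one_smul]⟩
  · rw [norm_smul, norm_inv, Complex.norm_real, norm_norm, inv_mul_cancel₀ (norm_ne_zero_iff.2 hy)]
  · rw [inner_smul_left, inner_self_eq_norm_sq_to_K, map_inv₀, Complex.conj_ofReal]
    field_simp
    norm_cast

theorem exists_norm_le_one_inner_apply_eq_opNorm {E F : Type*} [NormedAddCommGroup E]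
    [InnerProductSpace ℂ E] [FiniteDimensional ℂ E] [NormedAddCommGroup F]
    [InnerProductSpace ℂ F] (D : E →ₗ[ℂ] F) :
    ∃ u w, ‖u‖ ≤ 1 ∧ ‖w‖ ≤ 1 ∧ ⟪w, D u⟫_ℂ = opNorm D := by
  obtain ⟨u, hu, hDu⟩ :=
    (LinearMap.toContinuousLinearMap D).exists_norm_le_one_norm_apply_eq_opNorm
  obtain ⟨w, hw, hwD, -⟩ := exists_norm_le_one_inner_eq_norm (D u)
  exact ⟨u, w, hu, hw, hwD.trans (congrArg _ hDu)⟩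

theorem norm_smul_rankOne_apply_sq_le {E F : Type*} [NormedAddCommGroup E]
    [InnerProductSpace ℂ E] [NormedAddCommGroup F] [InnerProductSpace ℂ F] {a : F} {b : E}
    (ha : ‖a‖ ≤ 1) (hb : ‖b‖ ≤ 1) (c : ℝ) (t : E) :
    ‖((c : ℂ) • InnerProductSpace.rankOne ℂ a b) t‖ ^ 2 ≤ c ^ 2 * ‖t‖ ^ 2 := by
  have hab : ‖a‖ * ‖b‖ ≤ 1 := mul_le_one₀ ha (norm_nonneg b) hb
  calc ‖((c : ℂ) • InnerProductSpace.rankOne ℂ a b) t‖ ^ 2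
      ≤ (|c| * (‖a‖ * ‖b‖) * ‖t‖) ^ 2 := by
        gcongr
        simpa only [norm_smul, InnerProductSpace.norm_rankOne, Complex.norm_real,
          Real.norm_eq_abs] using ((c : ℂ) • InnerProductSpace.rankOne ℂ a b).le_opNorm t
    _ ≤ (|c| * ‖t‖) ^ 2 := by gcongr; exact mul_le_of_le_one_right (abs_nonneg c) hab
    _ = c ^ 2 * ‖t‖ ^ 2 := by rw [mul_pow, sq_abs]

section LocalFactorization

variable {X₁ X₂ Z₁ Z₂ : Type*}
  [NormedAddCommGroup X₁] [InnerProductSpace ℂ X₁] [FiniteDimensional ℂ X₁]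
  [NormedAddCommGroup X₂] [InnerProductSpace ℂ X₂] [FiniteDimensional ℂ X₂]
  [NormedAddCommGroup Z₁] [InnerProductSpace ℂ Z₁] [FiniteDimensional ℂ Z₁]
  [NormedAddCommGroup Z₂] [InnerProductSpace ℂ Z₂] [FiniteDimensional ℂ Z₂]

theorem exists_eq_sum_adjoint_comp_of_traceNorm (f : Z₂ →ₗ[ℂ] Z₁) (D : X₂ →ₗ[ℂ] X₁)
    (hf : D = 0 → f = 0) :
    ∃ (U : Fin (Module.finrank ℂ Z₂) → (Z₁ →ₗ[ℂ] X₁))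
      (V : Fin (Module.finrank ℂ Z₂) → (Z₂ →ₗ[ℂ] X₂)),
      f = ∑ i, LinearMap.adjoint (U i) ∘ₗ D ∘ₗ V i ∧
      (∀ t, ∑ i, ‖U i t‖ ^ 2 ≤ traceNorm f / opNorm D * ‖t‖ ^ 2) ∧
      (∀ z, ∑ i, ‖V i z‖ ^ 2 ≤ traceNorm f / opNorm D * ‖z‖ ^ 2) := by
  have hratio : 0 ≤ traceNorm f / opNorm D := div_nonneg (traceNorm_nonneg f) (norm_nonneg _)
  rcases eq_or_ne D 0 with rfl | hD
  · refine ⟨0, 0, by simp [hf rfl], fun t => ?_, fun z => ?_⟩ <;>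
      simpa using mul_nonneg hratio (sq_nonneg _)
  have hd : 0 < opNorm D := norm_pos_iff.2 (LinearMap.toContinuousLinearMap.map_ne_zero_iff.2 hD)
  obtain ⟨v, hv⟩ := exists_orthonormalBasis_traceNorm_eq_sum_norm_apply f
  choose e he1 _ he using fun i => exists_norm_le_one_inner_eq_norm (f (v i))
  obtain ⟨u, w, hu, hw, huw⟩ := exists_norm_le_one_inner_apply_eq_opNorm D
  set c : Fin (Module.finrank ℂ Z₂) → ℝ := fun i => √(‖f (v i)‖ / opNorm D)
  have hc : ∀ i, c i ^ 2 = ‖f (v i)‖ / opNorm D := fun i => Real.sq_sqrt (by positivity)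
  have hsum : ∀ s : ℝ, ∑ i, c i ^ 2 * s = traceNorm f / opNorm D * s := fun s => by
    simp only [hc, hv, ← Finset.sum_mul, Finset.sum_div]
  refine ⟨fun i => ((c i : ℂ) • InnerProductSpace.rankOne ℂ w (e i) : Z₁ →L[ℂ] X₁),
    fun i => ((c i : ℂ) • InnerProductSpace.rankOne ℂ u (v i) : Z₂ →L[ℂ] X₂), ?_, ?_, ?_⟩
  · ext z
    refine ext_inner_left ℂ fun t => ?_
    conv_lhs => rw [← v.sum_repr' z, map_sum, inner_sum]
    simp only [LinearMap.sum_apply, LinearMap.comp_apply, inner_sum,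
      LinearMap.adjoint_inner_right, ContinuousLinearMap.coe_coe, FunLike.coe_smul, Pi.smul_apply,
      InnerProductSpace.rankOne_apply, map_smul, inner_smul_left, inner_smul_right, huw,
      Complex.conj_ofReal, inner_conj_symm]
    refine Finset.sum_congr rfl fun i _ => ?_
    rw [← he i, inner_smul_right]
    have hcd : (c i : ℂ) * c i * opNorm D = ‖f (v i)‖ := by
      exact_mod_cast (by rw [← sq, hc, div_mul_cancel₀ _ hd.ne'] : c i * c i * opNorm D = _)
    linear_combination (⟪v i, z⟫_ℂ * ⟪t, e i⟫_ℂ) * hcd.symm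
  · exact fun t => (hsum _).le.trans' <|
      Finset.sum_le_sum fun i _ => norm_smul_rankOne_apply_sq_le hw (he1 i) (c i) t
  · exact fun z => (hsum _).le.trans' <|
      Finset.sum_le_sum fun i _ => norm_smul_rankOne_apply_sq_le hu (v.orthonormal.1 i).le (c i) z

end LocalFactorization

section Stack

variable {ι : Type*} {X₁ X₂ Z₁ Z₂ : Type*}
  [NormedAddCommGroup X₁] [InnerProductSpace ℂ X₁]
  [NormedAddCommGroup X₂] [InnerProductSpace ℂ X₂]
  [NormedAddCommGroup Z₁] [InnerProductSpace ℂ Z₁]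
  [NormedAddCommGroup Z₂] [InnerProductSpace ℂ Z₂]

def piLpStack (F : ι → (Z₁ →ₗ[ℂ] X₁)) : Z₁ →ₗ[ℂ] PiLp 2 (fun _ : ι => X₁) :=
  (WithLp.linearEquiv 2 ℂ (ι → X₁)).symm.toLinearMap ∘ₗ LinearMap.pi F

@[simp]
theorem piLpStack_apply (F : ι → (Z₁ →ₗ[ℂ] X₁)) (z : Z₁) (i : ι) :
    piLpStack F z i = F i z :=
  rfl

theorem norm_piLpStack_apply_sq [Fintype ι] (F : ι → (Z₁ →ₗ[ℂ] X₁)) (z : Z₁) :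
    ‖piLpStack F z‖ ^ 2 = ∑ i, ‖F i z‖ ^ 2 :=
  PiLp.norm_sq_eq_of_L2 _ _

theorem opNorm_piLpStack_sq_le [Fintype ι] [FiniteDimensional ℂ Z₁] {F : ι → (Z₁ →ₗ[ℂ] X₁)}
    {C : ℝ} (hC : 0 ≤ C) (hF : ∀ z, ∑ i, ‖F i z‖ ^ 2 ≤ C * ‖z‖ ^ 2) :
    opNorm (piLpStack F) ^ 2 ≤ C := by
  have hle : opNorm (piLpStack F) ≤ √C := by
    refine ContinuousLinearMap.opNorm_le_bound _ (Real.sqrt_nonneg C) fun z => ?_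
    rw [LinearMap.coe_toContinuousLinearMap', ← Real.sqrt_sq (norm_nonneg _),
      ← Real.sqrt_sq (norm_nonneg z), ← Real.sqrt_mul hC, norm_piLpStack_apply_sq]
    exact Real.sqrt_le_sqrt (hF z)
  calc opNorm (piLpStack F) ^ 2 ≤ √C ^ 2 := pow_le_pow_left₀ (norm_nonneg _) hle 2
    _ = C := Real.sq_sqrt hC

theorem adjoint_piLpStack_comp_piBlock_comp_piLpStack [Fintype ι] [FiniteDimensional ℂ X₁]
    [FiniteDimensional ℂ Z₁] [FiniteDimensional ℂ X₂] [FiniteDimensional ℂ Z₂]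
    (F : ι → (Z₁ →ₗ[ℂ] X₁)) (D : X₂ →ₗ[ℂ] X₁) (G : ι → (Z₂ →ₗ[ℂ] X₂)) :
    LinearMap.adjoint (piLpStack F) ∘ₗ piBlock (fun _ : ι => D) ∘ₗ piLpStack G =
      ∑ i, LinearMap.adjoint (F i) ∘ₗ D ∘ₗ G i := by
  ext z
  refine ext_inner_left ℂ fun t => ?_
  simp only [LinearMap.comp_apply, LinearMap.adjoint_inner_right, LinearMap.sum_apply,
    inner_sum, PiLp.inner_apply, piLpStack_apply]
  rfl

end Stack

section RelGamma2

variable {D₁ D₂ : Type*} [Fintype D₁] [Fintype D₂] {X₁ X₂ Z₁ Z₂ : Type*}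
  [NormedAddCommGroup X₁] [InnerProductSpace ℂ X₁] [FiniteDimensional ℂ X₁]
  [NormedAddCommGroup X₂] [InnerProductSpace ℂ X₂] [FiniteDimensional ℂ X₂]
  [NormedAddCommGroup Z₁] [InnerProductSpace ℂ Z₁] [FiniteDimensional ℂ Z₁]
  [NormedAddCommGroup Z₂] [InnerProductSpace ℂ Z₂] [FiniteDimensional ℂ Z₂]
  {A : D₁ → D₂ → (Z₂ →ₗ[ℂ] Z₁)} {Δ : D₁ → D₂ → (X₂ →ₗ[ℂ] X₁)}

theorem relGamma2_le_of_eq_sum_adjoint_comp {P : Type*} [Fintype P]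
    {U : D₁ → P → (Z₁ →ₗ[ℂ] X₁)} {V : D₂ → P → (Z₂ →ₗ[ℂ] X₂)} {C : ℝ} (hC : 0 ≤ C)
    (hA : ∀ x y, A x y = ∑ p, LinearMap.adjoint (U x p) ∘ₗ Δ x y ∘ₗ V y p)
    (hU : ∀ x t, ∑ p, ‖U x p t‖ ^ 2 ≤ C * ‖t‖ ^ 2)
    (hV : ∀ y z, ∑ p, ‖V y p z‖ ^ 2 ≤ C * ‖z‖ ^ 2) :
    relGamma2 A Δ ≤ ENNReal.ofReal C := by
  let e := Fintype.equivFin P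
  let Υ x := piLpStack fun j => U x (e.symm j)
  let Φ y := piLpStack fun j => V y (e.symm j)
  have hfact : ∀ x y, A x y =
      LinearMap.adjoint (Υ x) ∘ₗ piBlock (fun _ => Δ x y) ∘ₗ Φ y := fun x y => by
    rw [adjoint_piLpStack_comp_piBlock_comp_piLpStack, hA,
      e.symm.sum_comp fun p => LinearMap.adjoint (U x p) ∘ₗ Δ x y ∘ₗ V y p]
  refine (iInf₂_le _ Υ).trans <| (iInf₂_le Φ hfact).trans <|
    sup_le (iSup_le fun x => ENNReal.ofReal_le_ofReal ?_)
      (iSup_le fun y => ENNReal.ofReal_le_ofReal ?_)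
  · exact opNorm_piLpStack_sq_le hC fun t => by
      simpa only [e.symm.sum_comp fun p => ‖U x p t‖ ^ 2] using hU x t
  · exact opNorm_piLpStack_sq_le hC fun z => by
      simpa only [e.symm.sum_comp fun p => ‖V y p z‖ ^ 2] using hV y z

theorem relGamma2_le_sum_of_eq_sum_adjoint_comp {ι : Type*} [Fintype ι]
    {U : D₁ → D₂ → ι → (Z₁ →ₗ[ℂ] X₁)} {V : D₁ → D₂ → ι → (Z₂ →ₗ[ℂ] X₂)} {c : D₁ → D₂ → ℝ}
    (hc : ∀ x y, 0 ≤ c x y)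
    (hA : ∀ x y, A x y = ∑ i, LinearMap.adjoint (U x y i) ∘ₗ Δ x y ∘ₗ V x y i)
    (hU : ∀ x y t, ∑ i, ‖U x y i t‖ ^ 2 ≤ c x y * ‖t‖ ^ 2)
    (hV : ∀ x y z, ∑ i, ‖V x y i z‖ ^ 2 ≤ c x y * ‖z‖ ^ 2) :
    relGamma2 A Δ ≤ ENNReal.ofReal (∑ x, ∑ y, c x y) := by
  classical
  have hrow : ∀ x, ∑ y, c x y ≤ ∑ x, ∑ y, c x y := fun x =>
    Finset.single_le_sum (f := fun x => ∑ y, c x y)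
      (fun x _ => Finset.sum_nonneg fun y _ => hc x y) (Finset.mem_univ x)
  have hcol : ∀ y, ∑ x, c x y ≤ ∑ x, ∑ y, c x y := fun y => by
    rw [Finset.sum_comm]
    exact Finset.single_le_sum (f := fun y => ∑ x, c x y)
      (fun y _ => Finset.sum_nonneg fun x _ => hc x y) (Finset.mem_univ y)
  refine relGamma2_le_of_eq_sum_adjoint_comp (P := D₁ × D₂ × ι)
    (U := fun x p => if p.1 = x then U x p.2.1 p.2.2 else 0)
    (V := fun y p => if p.2.1 = y then V p.1 y p.2.2 else 0)
    (Finset.sum_nonneg fun x _ => Finset.sum_nonneg fun y _ => hc x y) (fun x y => ?_)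
    (fun x t => ?_) (fun y z => ?_)
  · rw [hA, Fintype.sum_prod_type, Fintype.sum_eq_single x fun x' hx' => by simp [hx'],
      Fintype.sum_prod_type, Fintype.sum_eq_single y fun y' hy' => by simp [hy']]
    simp only [↓reduceIte]
  · calc ∑ p : D₁ × D₂ × ι, ‖(if p.1 = x then U x p.2.1 p.2.2 else 0) t‖ ^ 2
          = ∑ y, ∑ i, ‖U x y i t‖ ^ 2 := by
            simp [Fintype.sum_prod_type, apply_ite (fun L : Z₁ →ₗ[ℂ] X₁ => ‖L t‖ ^ 2)]
        _ ≤ ∑ y, c x y * ‖t‖ ^ 2 := Finset.sum_le_sum fun y _ => hU x y t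
        _ ≤ (∑ x, ∑ y, c x y) * ‖t‖ ^ 2 := by
            rw [← Finset.sum_mul]
            exact mul_le_mul_of_nonneg_right (hrow x) (sq_nonneg _)
  · calc ∑ p : D₁ × D₂ × ι, ‖(if p.2.1 = y then V p.1 y p.2.2 else 0) z‖ ^ 2
          = ∑ x, ∑ i, ‖V x y i z‖ ^ 2 := by
            simp [Fintype.sum_prod_type, apply_ite (fun L : Z₂ →ₗ[ℂ] X₂ => ‖L z‖ ^ 2)]
        _ ≤ ∑ x, c x y * ‖z‖ ^ 2 := Finset.sum_le_sum fun x _ => hV x y z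
        _ ≤ (∑ x, ∑ y, c x y) * ‖z‖ ^ 2 := by
            rw [← Finset.sum_mul]
            exact mul_le_mul_of_nonneg_right (hcol y) (sq_nonneg _)

end RelGamma2

/-- If `A_{xy} = 0` whenever `Δ_{xy} = 0`, then `γ₂(A|Δ)` is finite, and
`γ₂(A|Δ) ≤ Σ_{x,y} ‖A_{xy}‖_tr / ‖Δ_{xy}‖` (summands with `Δ_{xy} = 0` are `0`,
by the convention `0/0 = 0`). -/
theorem statement0 {D₁ D₂ : Type} [Fintype D₁] [Fintype D₂]
    {X₁ X₂ Z₁ Z₂ : Type}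
    [NormedAddCommGroup X₁] [InnerProductSpace ℂ X₁] [FiniteDimensional ℂ X₁]
    [NormedAddCommGroup X₂] [InnerProductSpace ℂ X₂] [FiniteDimensional ℂ X₂]
    [NormedAddCommGroup Z₁] [InnerProductSpace ℂ Z₁] [FiniteDimensional ℂ Z₁]
    [NormedAddCommGroup Z₂] [InnerProductSpace ℂ Z₂] [FiniteDimensional ℂ Z₂]
    (A : D₁ → D₂ → (Z₂ →ₗ[ℂ] Z₁)) (Δ : D₁ → D₂ → (X₂ →ₗ[ℂ] X₁))
    (h : ∀ x y, Δ x y = 0 → A x y = 0) :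
    relGamma2 A Δ ≠ ⊤ ∧
      relGamma2 A Δ ≤
        ENNReal.ofReal (∑ x, ∑ y, traceNorm (A x y) / opNorm (Δ x y)) := by
  choose U V hA hU hV using fun x y =>
    exists_eq_sum_adjoint_comp_of_traceNorm (A x y) (Δ x y) (h x y)
  have hle := relGamma2_le_sum_of_eq_sum_adjoint_comp
    (fun x y => div_nonneg (traceNorm_nonneg (A x y)) (norm_nonneg _)) hA hU hV
  exact ⟨ne_top_of_le_ne_top ENNReal.ofReal_ne_top hle, hle⟩
end
end

section
/- Composition property of the relative γ₂-norm: let D₁, D₂ be finite sets, X₁, X₂, Y₁, Y₂, Z₁, Z₂ finite-dimensional complex inner product spaces, and A = (A_{xy} : Z₂ → Z₁), B = (B_{xy} : Y₂ → Y₁), Δ = (Δ_{xy} : X₂ → X₁) families of linear maps indexed by x ∈ D₁, y ∈ D₂. If γ₂(A|B) < +∞ and γ₂(B|Δ) < +∞, then γ₂(A|Δ) ≤ γ₂(A|B) · γ₂(B|Δ). -/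
/-!
Substituting a factorization `B_{xy} = Υ'_x* (Δ_{xy} ⊗ 1_m) Φ'_y` into a factorization
`A_{xy} = Υ_x* (B_{xy} ⊗ 1_k) Φ_y` gives
`A_{xy} = ((Υ'_x ⊗ 1_k) Υ_x)* (Δ_{xy} ⊗ 1_{km}) ((Φ'_y ⊗ 1_k) Φ_y)`, and
`‖(Υ'_x ⊗ 1_k) Υ_x‖ ≤ ‖Υ'_x‖ ‖Υ_x‖` (likewise for `Φ`), so the cost of the composite
factorization is at most the product of the two costs. Taking the infimum over both (nonempty)
families of factorizations gives the inequality.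
-/

noncomputable section

open scoped ENNReal ComplexOrder

section PiBlock

variable {ι : Type*} [Fintype ι] {X₁ X₂ X₃ : Type*}
    [NormedAddCommGroup X₁] [InnerProductSpace ℂ X₁]
    [NormedAddCommGroup X₂] [InnerProductSpace ℂ X₂]
    [NormedAddCommGroup X₃] [InnerProductSpace ℂ X₃]

@[simp]
theorem piBlock_apply (f : ι → (X₂ →ₗ[ℂ] X₁)) (v : PiLp 2 (fun _ : ι => X₂)) (i : ι) :
    piBlock f v i = f i (v i) := rfl

theorem piBlock_comp (f : ι → (X₂ →ₗ[ℂ] X₁)) (g : ι → (X₃ →ₗ[ℂ] X₂)) :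
    piBlock (fun i => f i ∘ₗ g i) = piBlock f ∘ₗ piBlock g := rfl

theorem adjoint_piBlock [FiniteDimensional ℂ X₁] [FiniteDimensional ℂ X₂]
    (f : ι → (X₂ →ₗ[ℂ] X₁)) :
    LinearMap.adjoint (piBlock f) = piBlock fun i => LinearMap.adjoint (f i) := by
  refine ((LinearMap.eq_adjoint_iff _ _).2 fun v w => ?_).symm
  simp [PiLp.inner_apply, LinearMap.adjoint_inner_left]

end PiBlock

section OpNorm

variable {E F G : Type*}
    [NormedAddCommGroup E] [InnerProductSpace ℂ E] [FiniteDimensional ℂ E]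
    [NormedAddCommGroup F] [InnerProductSpace ℂ F]
    [NormedAddCommGroup G] [InnerProductSpace ℂ G]

theorem opNorm_nonneg (f : E →ₗ[ℂ] G) : 0 ≤ opNorm f := norm_nonneg _

theorem norm_apply_le_opNorm_mul (f : E →ₗ[ℂ] G) (v : E) : ‖f v‖ ≤ opNorm f * ‖v‖ :=
  (LinearMap.toContinuousLinearMap f).le_opNorm v

theorem opNorm_le_bound (f : E →ₗ[ℂ] G) {M : ℝ} (hM : 0 ≤ M)
    (h : ∀ v, ‖f v‖ ≤ M * ‖v‖) : opNorm f ≤ M :=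
  ContinuousLinearMap.opNorm_le_bound _ hM h

theorem opNorm_comp_le [FiniteDimensional ℂ F] (f : F →ₗ[ℂ] G) (g : E →ₗ[ℂ] F) :
    opNorm (f ∘ₗ g) ≤ opNorm f * opNorm g :=
  opNorm_le_bound _ (mul_nonneg (opNorm_nonneg f) (opNorm_nonneg g)) fun v =>
    calc ‖f (g v)‖ ≤ opNorm f * ‖g v‖ := norm_apply_le_opNorm_mul f _
      _ ≤ opNorm f * (opNorm g * ‖v‖) :=
        mul_le_mul_of_nonneg_left (norm_apply_le_opNorm_mul g v) (opNorm_nonneg f)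
      _ = opNorm f * opNorm g * ‖v‖ := (mul_assoc _ _ _).symm

theorem opNorm_linearIsometryEquiv_comp_le (e : F ≃ₗᵢ[ℂ] G) (g : E →ₗ[ℂ] F) :
    opNorm (e.toLinearMap ∘ₗ g) ≤ opNorm g :=
  opNorm_le_bound _ (opNorm_nonneg g) fun v =>
    (e.norm_map (g v)).trans_le (norm_apply_le_opNorm_mul g v)

theorem opNorm_piBlock_le {ι : Type*} [Fintype ι] (f : ι → (E →ₗ[ℂ] G)) {M : ℝ}
    (hM : 0 ≤ M) (hf : ∀ i, opNorm (f i) ≤ M) : opNorm (piBlock f) ≤ M := by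
  refine opNorm_le_bound _ hM fun v => ?_
  rw [PiLp.norm_eq_of_L2, PiLp.norm_eq_of_L2, ← Real.sqrt_sq hM, ← Real.sqrt_mul (sq_nonneg M),
    Finset.mul_sum]
  refine Real.sqrt_le_sqrt (Finset.sum_le_sum fun i _ => ?_)
  rw [piBlock_apply, ← mul_pow]
  exact pow_le_pow_left₀ (norm_nonneg _) ((norm_apply_le_opNorm_mul _ _).trans
    (mul_le_mul_of_nonneg_right (hf i) (norm_nonneg _))) 2

theorem opNorm_linearIsometryEquiv_comp_piBlock_comp_le {W H : Type*}
    [NormedAddCommGroup W] [InnerProductSpace ℂ W] [FiniteDimensional ℂ W]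
    [NormedAddCommGroup H] [InnerProductSpace ℂ H] {k : ℕ}
    (e : PiLp 2 (fun _ : Fin k => G) ≃ₗᵢ[ℂ] H) (g : E →ₗ[ℂ] G)
    (f : W →ₗ[ℂ] PiLp 2 (fun _ : Fin k => E)) :
    opNorm (e.toLinearMap ∘ₗ piBlock (fun _ => g) ∘ₗ f) ≤ opNorm f * opNorm g :=
  (opNorm_linearIsometryEquiv_comp_le _ _).trans <| (opNorm_comp_le _ _).trans <|
    (mul_le_mul_of_nonneg_right (opNorm_piBlock_le _ (opNorm_nonneg g) fun _ => le_rfl)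
      (opNorm_nonneg f)).trans_eq (mul_comm _ _)

end OpNorm

theorem ENNReal.ofReal_sq_le_mul {a b c : ℝ} (ha : 0 ≤ a) (h : a ≤ b * c) :
    ENNReal.ofReal (a ^ 2) ≤ ENNReal.ofReal (b ^ 2) * ENNReal.ofReal (c ^ 2) := by
  rw [← ENNReal.ofReal_mul (sq_nonneg b), ← mul_pow]
  exact ENNReal.ofReal_le_ofReal (pow_le_pow_left₀ ha h 2)

def finMulPiLpEquiv (k m : ℕ) (X : Type*) [NormedAddCommGroup X] [InnerProductSpace ℂ X] :
    PiLp 2 (fun _ : Fin (k * m) => X) ≃ₗᵢ[ℂ]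
      PiLp 2 (fun _ : Fin k => PiLp 2 (fun _ : Fin m => X)) :=
  (LinearIsometryEquiv.piLpCongrLeft 2 ℂ X
      (finProdFinEquiv.symm.trans (Equiv.sigmaEquivProd (Fin k) (Fin m)).symm)).trans
    (LinearIsometryEquiv.piLpCurry ℂ 2 fun (_ : Fin k) (_ : Fin m) => X)

theorem finMulPiLpEquiv_apply (k m : ℕ) {X : Type*} [NormedAddCommGroup X]
    [InnerProductSpace ℂ X] (v : PiLp 2 (fun _ : Fin (k * m) => X)) (i : Fin k) (j : Fin m) :
    finMulPiLpEquiv k m X v i j = v (finProdFinEquiv (i, j)) := by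
  simp [finMulPiLpEquiv, LinearIsometryEquiv.piLpCongrLeft_apply, Equiv.piCongrLeft', Sigma.curry]

theorem finMulPiLpEquiv_piBlock (k m : ℕ) {X₁ X₂ : Type*}
    [NormedAddCommGroup X₁] [InnerProductSpace ℂ X₁]
    [NormedAddCommGroup X₂] [InnerProductSpace ℂ X₂] (f : X₂ →ₗ[ℂ] X₁) :
    (finMulPiLpEquiv k m X₁).toLinearMap ∘ₗ piBlock (fun _ => f) =
      piBlock (fun _ => piBlock fun _ => f) ∘ₗ (finMulPiLpEquiv k m X₂).toLinearMap := by
  ext v i j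
  simp [finMulPiLpEquiv_apply]

section Factorization

variable {D₁ D₂ : Type*} {X₁ X₂ Y₁ Y₂ Z₁ Z₂ : Type*}
    [NormedAddCommGroup X₁] [InnerProductSpace ℂ X₁] [FiniteDimensional ℂ X₁]
    [NormedAddCommGroup X₂] [InnerProductSpace ℂ X₂]
    [NormedAddCommGroup Y₁] [InnerProductSpace ℂ Y₁] [FiniteDimensional ℂ Y₁]
    [NormedAddCommGroup Y₂] [InnerProductSpace ℂ Y₂] [FiniteDimensional ℂ Y₂]
    [NormedAddCommGroup Z₁] [InnerProductSpace ℂ Z₁] [FiniteDimensional ℂ Z₁]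
    [NormedAddCommGroup Z₂] [InnerProductSpace ℂ Z₂] [FiniteDimensional ℂ Z₂]

structure Gamma2Factorization (A : D₁ → D₂ → (Z₂ →ₗ[ℂ] Z₁)) (Δ : D₁ → D₂ → (X₂ →ₗ[ℂ] X₁)) where
  k : ℕ
  Υ : D₁ → (Z₁ →ₗ[ℂ] PiLp 2 (fun _ : Fin k => X₁))
  Φ : D₂ → (Z₂ →ₗ[ℂ] PiLp 2 (fun _ : Fin k => X₂))
  eq : ∀ x y, A x y = LinearMap.adjoint (Υ x) ∘ₗ piBlock (fun _ : Fin k => Δ x y) ∘ₗ Φ y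

namespace Gamma2Factorization

variable {A : D₁ → D₂ → (Z₂ →ₗ[ℂ] Z₁)} {B : D₁ → D₂ → (Y₂ →ₗ[ℂ] Y₁)}
  {Δ : D₁ → D₂ → (X₂ →ₗ[ℂ] X₁)}

def cost (F : Gamma2Factorization A Δ) : ℝ≥0∞ :=
  (⨆ x, ENNReal.ofReal (opNorm (F.Υ x) ^ 2)) ⊔ (⨆ y, ENNReal.ofReal (opNorm (F.Φ y) ^ 2))

def comp (F : Gamma2Factorization A B) (G : Gamma2Factorization B Δ) :
    Gamma2Factorization A Δ where
  k := F.k * G.k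
  Υ x := (finMulPiLpEquiv F.k G.k X₁).symm.toLinearMap ∘ₗ piBlock (fun _ => G.Υ x) ∘ₗ F.Υ x
  Φ y := (finMulPiLpEquiv F.k G.k X₂).symm.toLinearMap ∘ₗ piBlock (fun _ => G.Φ y) ∘ₗ F.Φ y
  eq x y := by
    simp only [LinearMap.adjoint_comp, adjoint_piBlock, LinearMap.comp_assoc,
      LinearIsometryEquiv.adjoint_toLinearMap_eq_symm, LinearIsometryEquiv.symm_symm]
    rw [← LinearMap.comp_assoc _ (piBlock fun _ => Δ x y), finMulPiLpEquiv_piBlock, F.eq x y]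
    simp only [G.eq x y, piBlock_comp, LinearMap.comp_assoc,
      LinearIsometryEquiv.toLinearEquiv_symm, LinearEquiv.comp_symm_assoc]

theorem ofReal_opNorm_Υ_sq_le_cost (F : Gamma2Factorization A Δ) (x : D₁) :
    ENNReal.ofReal (opNorm (F.Υ x) ^ 2) ≤ F.cost :=
  le_sup_of_le_left (le_iSup_of_le x le_rfl)

theorem ofReal_opNorm_Φ_sq_le_cost (F : Gamma2Factorization A Δ) (y : D₂) :
    ENNReal.ofReal (opNorm (F.Φ y) ^ 2) ≤ F.cost :=
  le_sup_of_le_right (le_iSup_of_le y le_rfl)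

theorem cost_comp_le (F : Gamma2Factorization A B) (G : Gamma2Factorization B Δ) :
    (F.comp G).cost ≤ F.cost * G.cost :=
  sup_le
    (iSup_le fun x => (ENNReal.ofReal_sq_le_mul (opNorm_nonneg _)
      (opNorm_linearIsometryEquiv_comp_piBlock_comp_le _ _ _)).trans
        (mul_le_mul' (F.ofReal_opNorm_Υ_sq_le_cost x) (G.ofReal_opNorm_Υ_sq_le_cost x)))
    (iSup_le fun y => (ENNReal.ofReal_sq_le_mul (opNorm_nonneg _)
      (opNorm_linearIsometryEquiv_comp_piBlock_comp_le _ _ _)).trans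
        (mul_le_mul' (F.ofReal_opNorm_Φ_sq_le_cost y) (G.ofReal_opNorm_Φ_sq_le_cost y)))

theorem relGamma2_le_cost [Fintype D₁] [Fintype D₂] [FiniteDimensional ℂ X₂]
    (F : Gamma2Factorization A Δ) : relGamma2 A Δ ≤ F.cost :=
  iInf_le_of_le F.k <| iInf_le_of_le F.Υ <| iInf_le_of_le F.Φ <| iInf_le_of_le F.eq le_rfl

end Gamma2Factorization

theorem relGamma2_eq_iInf_cost [Fintype D₁] [Fintype D₂] [FiniteDimensional ℂ X₂]
    (A : D₁ → D₂ → (Z₂ →ₗ[ℂ] Z₁)) (Δ : D₁ → D₂ → (X₂ →ₗ[ℂ] X₁)) :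
    relGamma2 A Δ = ⨅ F : Gamma2Factorization A Δ, F.cost := by
  refine le_antisymm (le_iInf Gamma2Factorization.relGamma2_le_cost) ?_
  simp only [relGamma2, le_iInf_iff]
  exact fun k Υ Φ h => iInf_le (fun F : Gamma2Factorization A Δ => F.cost) ⟨k, Υ, Φ, h⟩

end Factorization

/-- Composition property of the relative `γ₂`-norm:
`γ₂(A|Δ) ≤ γ₂(A|B) · γ₂(B|Δ)` whenever `γ₂(A|B)` and `γ₂(B|Δ)` are finite. -/
theorem statement6 {D₁ D₂ : Type} [Fintype D₁] [Fintype D₂]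
    {X₁ X₂ Y₁ Y₂ Z₁ Z₂ : Type}
    [NormedAddCommGroup X₁] [InnerProductSpace ℂ X₁] [FiniteDimensional ℂ X₁]
    [NormedAddCommGroup X₂] [InnerProductSpace ℂ X₂] [FiniteDimensional ℂ X₂]
    [NormedAddCommGroup Z₁] [InnerProductSpace ℂ Z₁] [FiniteDimensional ℂ Z₁]
    [NormedAddCommGroup Z₂] [InnerProductSpace ℂ Z₂] [FiniteDimensional ℂ Z₂]
    [NormedAddCommGroup Y₁] [InnerProductSpace ℂ Y₁] [FiniteDimensional ℂ Y₁]
    [NormedAddCommGroup Y₂] [InnerProductSpace ℂ Y₂] [FiniteDimensional ℂ Y₂]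
    (A : D₁ → D₂ → (Z₂ →ₗ[ℂ] Z₁)) (B : D₁ → D₂ → (Y₂ →ₗ[ℂ] Y₁))
    (Δ : D₁ → D₂ → (X₂ →ₗ[ℂ] X₁))
    (hAB : relGamma2 A B ≠ ⊤) (hBΔ : relGamma2 B Δ ≠ ⊤) :
    relGamma2 A Δ ≤ relGamma2 A B * relGamma2 B Δ := by
  rw [relGamma2_eq_iInf_cost A B, Ne, iInf_eq_top, not_forall] at hAB
  rw [relGamma2_eq_iInf_cost B Δ, Ne, iInf_eq_top, not_forall] at hBΔ
  rw [relGamma2_eq_iInf_cost A B, relGamma2_eq_iInf_cost B Δ]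
  exact ENNReal.le_iInf_mul_iInf hAB hBΔ fun F G =>
    (F.comp G).relGamma2_le_cost.trans (F.cost_comp_le G)

end
end

section
/- Tensor product property of the relative γ₂-norm: let D₁, D₂ be finite sets and A = (A_{xy} : Z₂ → Z₁), B = (B_{xy} : Z₂′ → Z₁′), Δ = (Δ_{xy} : X₂ → X₁), E = (E_{xy} : X₂′ → X₁′) families of linear maps between finite-dimensional complex inner product spaces, indexed by x ∈ D₁, y ∈ D₂, with γ₂(A|Δ) < +∞ and γ₂(B|E) < +∞. Then γ₂((A_{xy} ⊗ B_{xy})_{x,y} | (Δ_{xy} ⊗ E_{xy})_{x,y}) ≤ γ₂(A|Δ) · γ₂(B|E), where A_{xy} ⊗ B_{xy} : Z₂ ⊗ Z₂′ → Z₁ ⊗ Z₁′ and Δ_{xy} ⊗ E_{xy} : X₂ ⊗ X₂′ → X₁ ⊗ X₁′ are the tensor products of linear maps. -/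
/-! Take factorizations `A_{xy} = Υ_x* (Δ_{xy} ⊗ 1_k) Φ_y` and `B_{xy} = Υ'_x* (E_{xy} ⊗ 1_l) Φ'_y`.
Identifying `(X ⊗ ℂᵏ) ⊗ (X' ⊗ ℂˡ)` isometrically with `(X ⊗ X') ⊗ ℂᵏˡ`, the maps `Υ_x ⊗ Υ'_x` and
`Φ_y ⊗ Φ'_y` factor `A_{xy} ⊗ B_{xy}` through `Δ_{xy} ⊗ E_{xy}`: on pure tensors this is the
identity `⟨u ⊗ u', v ⊗ v'⟩ = ⟨u, v⟩⟨u', v'⟩`. Operator norms are submultiplicative under `⊗`,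
so the cost of this factorization is at most the product of the two costs. -/

noncomputable section

open scoped ENNReal ComplexOrder

/-- A realization of the tensor product of two finite-dimensional complex inner product
spaces `Z, Z'` inside a space `ZW`: a bilinear map `t` whose image spans `ZW` and which
multiplies inner products of pure tensors (`⟨a ⊗ b, c ⊗ d⟩ = ⟨a,c⟩⟨b,d⟩`). -/
structure TensorStructure (Z Z' ZW : Type*)
    [NormedAddCommGroup Z] [InnerProductSpace ℂ Z]
    [NormedAddCommGroup Z'] [InnerProductSpace ℂ Z']
    [NormedAddCommGroup ZW] [InnerProductSpace ℂ ZW] where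
  t : Z →ₗ[ℂ] Z' →ₗ[ℂ] ZW
  inner_t : ∀ (a c : Z) (b d : Z'),
    (inner ℂ (t a b) (t c d) : ℂ) = (inner ℂ a c : ℂ) * (inner ℂ b d : ℂ)
  span_t : Submodule.span ℂ (Set.range fun p : Z × Z' => t p.1 p.2) = ⊤

namespace TensorProduct

variable {𝕜 E F G : Type*} [RCLike 𝕜]
  [NormedAddCommGroup E] [InnerProductSpace 𝕜 E]
  [NormedAddCommGroup F] [InnerProductSpace 𝕜 F]
  [NormedAddCommGroup G] [InnerProductSpace 𝕜 G]

theorem inner_lift_lift (β : E →ₗ[𝕜] F →ₗ[𝕜] G)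
    (hβ : ∀ a c b d, inner 𝕜 (β a b) (β c d) = inner 𝕜 a c * inner 𝕜 b d)
    (x y : E ⊗[𝕜] F) : inner 𝕜 (lift β x) (lift β y) = inner 𝕜 x y := by
  induction x using TensorProduct.induction_on with
  | zero => simp
  | add x x' hx hx' => simp only [map_add, inner_add_left, hx, hx']
  | tmul a b =>
    induction y using TensorProduct.induction_on with
    | zero => simp
    | add y y' hy hy' => simp only [map_add, inner_add_right, hy, hy']
    | tmul c d => simp [hβ]

def liftIsometry (β : E →ₗ[𝕜] F →ₗ[𝕜] G)
    (hβ : ∀ a c b d, inner 𝕜 (β a b) (β c d) = inner 𝕜 a c * inner 𝕜 b d) :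
    E ⊗[𝕜] F →ₗᵢ[𝕜] G :=
  (lift β).isometryOfInner (inner_lift_lift β hβ)

@[simp]
theorem liftIsometry_tmul (β : E →ₗ[𝕜] F →ₗ[𝕜] G)
    (hβ : ∀ a c b d, inner 𝕜 (β a b) (β c d) = inner 𝕜 a c * inner 𝕜 b d) (a : E) (b : F) :
    liftIsometry β hβ (a ⊗ₜ b) = β a b :=
  lift.tmul a b

end TensorProduct

open TensorProduct

theorem opNorm_coe {E F : Type*} [NormedAddCommGroup E] [InnerProductSpace ℂ E]
    [NormedAddCommGroup F] [InnerProductSpace ℂ F] [FiniteDimensional ℂ E] (f : E →L[ℂ] F) :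
    opNorm (f : E →ₗ[ℂ] F) = ‖f‖ :=
  congrArg norm (LinearMap.toContinuousLinearMap.apply_symm_apply f)

namespace TensorStructure

variable {Z Z' ZZ W X X' : Type*}
  [NormedAddCommGroup Z] [InnerProductSpace ℂ Z]
  [NormedAddCommGroup Z'] [InnerProductSpace ℂ Z']
  [NormedAddCommGroup ZZ] [InnerProductSpace ℂ ZZ]
  [NormedAddCommGroup W] [InnerProductSpace ℂ W]
  [NormedAddCommGroup X] [InnerProductSpace ℂ X]
  [NormedAddCommGroup X'] [InnerProductSpace ℂ X']

def isometryEquiv (T : TensorStructure Z Z' ZZ) : Z ⊗[ℂ] Z' ≃ₗᵢ[ℂ] ZZ :=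
  .ofSurjective (liftIsometry T.t T.inner_t) <| by
    refine (LinearMap.range_eq_top (f := (liftIsometry T.t T.inner_t).toLinearMap)).mp ?_
    rw [eq_top_iff, ← T.span_t, Submodule.span_le]
    rintro _ ⟨⟨a, b⟩, rfl⟩
    exact ⟨a ⊗ₜ b, liftIsometry_tmul _ _ a b⟩

@[simp]
theorem isometryEquiv_tmul (T : TensorStructure Z Z' ZZ) (a : Z) (b : Z') :
    T.isometryEquiv (a ⊗ₜ b) = T.t a b :=
  lift.tmul a b

theorem ext_map (T : TensorStructure Z Z' ZZ) {h₁ h₂ : ZZ →ₗ[ℂ] W}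
    (H : ∀ a b, h₁ (T.t a b) = h₂ (T.t a b)) : h₁ = h₂ :=
  LinearMap.ext_on T.span_t (by rintro _ ⟨⟨a, b⟩, rfl⟩; exact H a b)

theorem ext_inner_right (T : TensorStructure Z Z' ZZ) {u v : ZZ}
    (H : ∀ a b, inner ℂ u (T.t a b) = inner ℂ v (T.t a b)) : u = v := by
  refine T.isometryEquiv.symm.injective (TensorProduct.ext_iff_inner_right.mpr fun a b => ?_)
  simpa [← T.isometryEquiv.inner_map_map] using H a b

theorem exists_map_tmul_opNorm_le [FiniteDimensional ℂ Z] [FiniteDimensional ℂ Z']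
    [FiniteDimensional ℂ ZZ] (T : TensorStructure Z Z' ZZ) (P : X ⊗[ℂ] X' →ₗᵢ[ℂ] W)
    (f : Z →ₗ[ℂ] X) (g : Z' →ₗ[ℂ] X') :
    ∃ h : ZZ →ₗ[ℂ] W, (∀ a b, h (T.t a b) = P (f a ⊗ₜ g b)) ∧
      opNorm h ≤ opNorm f * opNorm g := by
  let h : ZZ →L[ℂ] W := P.toContinuousLinearMap.comp <|
    (mapL (LinearMap.toContinuousLinearMap f) (LinearMap.toContinuousLinearMap g)).comp
      (T.isometryEquiv.symm : ZZ →L[ℂ] Z ⊗[ℂ] Z')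
  refine ⟨h, fun a b => ?_, ?_⟩
  · change P (mapL _ _ (T.isometryEquiv.symm (T.t a b))) = _
    rw [← T.isometryEquiv_tmul, LinearIsometryEquiv.symm_apply_apply]
    rfl
  · rw [opNorm_coe, LinearIsometry.norm_toContinuousLinearMap_comp,
      ContinuousLinearMap.opNorm_comp_linearIsometryEquiv]
    exact norm_mapL_le _ _

end TensorStructure

section Pairing

variable {ι ι' κ : Type*} {X X' W : Type*}
  [NormedAddCommGroup X] [InnerProductSpace ℂ X]
  [NormedAddCommGroup X'] [InnerProductSpace ℂ X']
  [NormedAddCommGroup W] [InnerProductSpace ℂ W]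

/-- With `β` realizing `X ⊗ X'`, this is `(X ⊗ ℂ^ι) ⊗ (X' ⊗ ℂ^ι') → W ⊗ ℂ^κ`, where `e` reads
each coordinate of `κ` as a pair of coordinates. -/
def piPairing (β : X →ₗ[ℂ] X' →ₗ[ℂ] W) (e : κ ≃ ι × ι') :
    PiLp 2 (fun _ : ι => X) →ₗ[ℂ] PiLp 2 (fun _ : ι' => X') →ₗ[ℂ] PiLp 2 (fun _ : κ => W) :=
  LinearMap.mk₂ ℂ (fun v w => WithLp.toLp 2 fun m => β (v (e m).1) (w (e m).2))
    (fun _ _ _ => by ext; simp) (fun _ _ _ => by ext; simp)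
    (fun _ _ _ => by ext; simp) (fun _ _ _ => by ext; simp)

theorem piPairing_apply (β : X →ₗ[ℂ] X' →ₗ[ℂ] W) (e : κ ≃ ι × ι')
    (v : PiLp 2 fun _ : ι => X) (w : PiLp 2 fun _ : ι' => X') (m : κ) :
    piPairing β e v w m = β (v (e m).1) (w (e m).2) :=
  rfl

theorem inner_piPairing [Fintype ι] [Fintype ι'] [Fintype κ] (β : X →ₗ[ℂ] X' →ₗ[ℂ] W)
    (hβ : ∀ a c b d, inner ℂ (β a b) (β c d) = inner ℂ a c * inner ℂ b d) (e : κ ≃ ι × ι')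
    (v v' : PiLp 2 fun _ : ι => X) (w w' : PiLp 2 fun _ : ι' => X') :
    inner ℂ (piPairing β e v w) (piPairing β e v' w') = inner ℂ v v' * inner ℂ w w' := by
  simp only [PiLp.inner_apply, piPairing_apply, hβ, Finset.sum_mul_sum]
  rw [e.sum_comp fun p => inner ℂ (v p.1) (v' p.1) * inner ℂ (w p.2) (w' p.2),
    Fintype.sum_prod_type]

theorem piBlock_piPairing [Fintype ι] [Fintype ι'] [Fintype κ] {X₂ X₂' W₂ : Type*}
    [NormedAddCommGroup X₂] [InnerProductSpace ℂ X₂]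
    [NormedAddCommGroup X₂'] [InnerProductSpace ℂ X₂']
    [NormedAddCommGroup W₂] [InnerProductSpace ℂ W₂]
    (β : X →ₗ[ℂ] X' →ₗ[ℂ] W) (β₂ : X₂ →ₗ[ℂ] X₂' →ₗ[ℂ] W₂) (e : κ ≃ ι × ι')
    (Δ : X₂ →ₗ[ℂ] X) (E : X₂' →ₗ[ℂ] X') (Γ : W₂ →ₗ[ℂ] W)
    (hΓ : ∀ a b, Γ (β₂ a b) = β (Δ a) (E b))
    (v : PiLp 2 fun _ : ι => X₂) (w : PiLp 2 fun _ : ι' => X₂') :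
    piBlock (fun _ => Γ) (piPairing β₂ e v w) =
      piPairing β e (piBlock (fun _ => Δ) v) (piBlock (fun _ => E) w) := by
  ext m
  exact hΓ _ _

end Pairing

section Factorization

variable {ι ι' κ : Type*} [Fintype ι] [Fintype ι'] [Fintype κ]
  {X₁ X₂ X₁' X₂' XX₁ XX₂ Z₁ Z₂ Z₁' Z₂' ZZ₁ ZZ₂ : Type*}
  [NormedAddCommGroup X₁] [InnerProductSpace ℂ X₁] [FiniteDimensional ℂ X₁]
  [NormedAddCommGroup X₂] [InnerProductSpace ℂ X₂]
  [NormedAddCommGroup X₁'] [InnerProductSpace ℂ X₁'] [FiniteDimensional ℂ X₁']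
  [NormedAddCommGroup X₂'] [InnerProductSpace ℂ X₂']
  [NormedAddCommGroup XX₁] [InnerProductSpace ℂ XX₁] [FiniteDimensional ℂ XX₁]
  [NormedAddCommGroup XX₂] [InnerProductSpace ℂ XX₂]
  [NormedAddCommGroup Z₁] [InnerProductSpace ℂ Z₁] [FiniteDimensional ℂ Z₁]
  [NormedAddCommGroup Z₂] [InnerProductSpace ℂ Z₂]
  [NormedAddCommGroup Z₁'] [InnerProductSpace ℂ Z₁'] [FiniteDimensional ℂ Z₁']
  [NormedAddCommGroup Z₂'] [InnerProductSpace ℂ Z₂']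
  [NormedAddCommGroup ZZ₁] [InnerProductSpace ℂ ZZ₁] [FiniteDimensional ℂ ZZ₁]
  [NormedAddCommGroup ZZ₂] [InnerProductSpace ℂ ZZ₂]

theorem eq_adjoint_comp_piBlock_comp_of_tmul
    (TZ₁ : TensorStructure Z₁ Z₁' ZZ₁) (TZ₂ : TensorStructure Z₂ Z₂' ZZ₂)
    (β₁ : X₁ →ₗ[ℂ] X₁' →ₗ[ℂ] XX₁)
    (hβ₁ : ∀ a c b d, inner ℂ (β₁ a b) (β₁ c d) = inner ℂ a c * inner ℂ b d)
    (β₂ : X₂ →ₗ[ℂ] X₂' →ₗ[ℂ] XX₂) (e : κ ≃ ι × ι')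
    {A : Z₂ →ₗ[ℂ] Z₁} {B : Z₂' →ₗ[ℂ] Z₁'} {AB : ZZ₂ →ₗ[ℂ] ZZ₁}
    {Δ : X₂ →ₗ[ℂ] X₁} {E : X₂' →ₗ[ℂ] X₁'} {ΔE : XX₂ →ₗ[ℂ] XX₁}
    (hAB : ∀ a b, AB (TZ₂.t a b) = TZ₁.t (A a) (B b))
    (hΔE : ∀ a b, ΔE (β₂ a b) = β₁ (Δ a) (E b))
    {Υ : Z₁ →ₗ[ℂ] PiLp 2 (fun _ : ι => X₁)} {Φ : Z₂ →ₗ[ℂ] PiLp 2 (fun _ : ι => X₂)}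
    {Υ' : Z₁' →ₗ[ℂ] PiLp 2 (fun _ : ι' => X₁')} {Φ' : Z₂' →ₗ[ℂ] PiLp 2 (fun _ : ι' => X₂')}
    {F : ZZ₁ →ₗ[ℂ] PiLp 2 (fun _ : κ => XX₁)} {G : ZZ₂ →ₗ[ℂ] PiLp 2 (fun _ : κ => XX₂)}
    (hA : A = LinearMap.adjoint Υ ∘ₗ piBlock (fun _ => Δ) ∘ₗ Φ)
    (hB : B = LinearMap.adjoint Υ' ∘ₗ piBlock (fun _ => E) ∘ₗ Φ')
    (hF : ∀ c d, F (TZ₁.t c d) = piPairing β₁ e (Υ c) (Υ' d))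
    (hG : ∀ a b, G (TZ₂.t a b) = piPairing β₂ e (Φ a) (Φ' b)) :
    AB = LinearMap.adjoint F ∘ₗ piBlock (fun _ => ΔE) ∘ₗ G := by
  subst hA hB
  refine TZ₂.ext_map fun a b => TZ₁.ext_inner_right fun c d => ?_
  simp only [LinearMap.comp_apply, hAB, TZ₁.inner_t, LinearMap.adjoint_inner_left, hG, hF,
    piBlock_piPairing β₁ β₂ e Δ E ΔE hΔE, inner_piPairing β₁ hβ₁]

end Factorization

section Cost

variable {D₁ D₂ : Type*} {Z₁ Z₂ Y₁ Y₂ : Type*}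
  [NormedAddCommGroup Z₁] [InnerProductSpace ℂ Z₁] [FiniteDimensional ℂ Z₁]
  [NormedAddCommGroup Z₂] [InnerProductSpace ℂ Z₂] [FiniteDimensional ℂ Z₂]
  [NormedAddCommGroup Y₁] [InnerProductSpace ℂ Y₁]
  [NormedAddCommGroup Y₂] [InnerProductSpace ℂ Y₂]

def factorizationCost (Υ : D₁ → (Z₁ →ₗ[ℂ] Y₁)) (Φ : D₂ → (Z₂ →ₗ[ℂ] Y₂)) : ℝ≥0∞ :=
  (⨆ x, ENNReal.ofReal (opNorm (Υ x) ^ 2)) ⊔ (⨆ y, ENNReal.ofReal (opNorm (Φ y) ^ 2))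

theorem factorizationCost_le_mul {W₁ W₂ V₁ V₂ : Type*}
    [NormedAddCommGroup W₁] [InnerProductSpace ℂ W₁] [FiniteDimensional ℂ W₁]
    [NormedAddCommGroup W₂] [InnerProductSpace ℂ W₂] [FiniteDimensional ℂ W₂]
    [NormedAddCommGroup V₁] [InnerProductSpace ℂ V₁]
    [NormedAddCommGroup V₂] [InnerProductSpace ℂ V₂]
    {ZZ₁ ZZ₂ YY₁ YY₂ : Type*}
    [NormedAddCommGroup ZZ₁] [InnerProductSpace ℂ ZZ₁] [FiniteDimensional ℂ ZZ₁]
    [NormedAddCommGroup ZZ₂] [InnerProductSpace ℂ ZZ₂] [FiniteDimensional ℂ ZZ₂]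
    [NormedAddCommGroup YY₁] [InnerProductSpace ℂ YY₁]
    [NormedAddCommGroup YY₂] [InnerProductSpace ℂ YY₂]
    {Υ : D₁ → (Z₁ →ₗ[ℂ] Y₁)} {Φ : D₂ → (Z₂ →ₗ[ℂ] Y₂)}
    {Υ' : D₁ → (W₁ →ₗ[ℂ] V₁)} {Φ' : D₂ → (W₂ →ₗ[ℂ] V₂)}
    {F : D₁ → (ZZ₁ →ₗ[ℂ] YY₁)} {G : D₂ → (ZZ₂ →ₗ[ℂ] YY₂)}
    (hF : ∀ x, opNorm (F x) ≤ opNorm (Υ x) * opNorm (Υ' x))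
    (hG : ∀ y, opNorm (G y) ≤ opNorm (Φ y) * opNorm (Φ' y)) :
    factorizationCost F G ≤ factorizationCost Υ Φ * factorizationCost Υ' Φ' := by
  have sq_le : ∀ {r p q : ℝ}, 0 ≤ r → r ≤ p * q →
      ENNReal.ofReal (r ^ 2) ≤ ENNReal.ofReal (p ^ 2) * ENNReal.ofReal (q ^ 2) := fun hr h => by
    rw [← ENNReal.ofReal_mul (sq_nonneg _), ← mul_pow]
    exact ENNReal.ofReal_le_ofReal (pow_le_pow_left₀ hr h 2)
  refine sup_le (iSup_le fun x => ?_) (iSup_le fun y => ?_)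
  · exact (sq_le (norm_nonneg _) (hF x)).trans <| mul_le_mul'
      (le_sup_of_le_left (le_iSup (fun x => ENNReal.ofReal (opNorm (Υ x) ^ 2)) x))
      (le_sup_of_le_left (le_iSup (fun x => ENNReal.ofReal (opNorm (Υ' x) ^ 2)) x))
  · exact (sq_le (norm_nonneg _) (hG y)).trans <| mul_le_mul'
      (le_sup_of_le_right (le_iSup (fun y => ENNReal.ofReal (opNorm (Φ y) ^ 2)) y))
      (le_sup_of_le_right (le_iSup (fun y => ENNReal.ofReal (opNorm (Φ' y) ^ 2)) y))

end Cost

section RelGamma2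

variable {D₁ D₂ : Type*} [Fintype D₁] [Fintype D₂] {X₁ X₂ Z₁ Z₂ : Type*}
  [NormedAddCommGroup X₁] [InnerProductSpace ℂ X₁] [FiniteDimensional ℂ X₁]
  [NormedAddCommGroup X₂] [InnerProductSpace ℂ X₂] [FiniteDimensional ℂ X₂]
  [NormedAddCommGroup Z₁] [InnerProductSpace ℂ Z₁] [FiniteDimensional ℂ Z₁]
  [NormedAddCommGroup Z₂] [InnerProductSpace ℂ Z₂] [FiniteDimensional ℂ Z₂]
  {A : D₁ → D₂ → (Z₂ →ₗ[ℂ] Z₁)} {Δ : D₁ → D₂ → (X₂ →ₗ[ℂ] X₁)}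

theorem relGamma2_le_factorizationCost {k : ℕ}
    {Υ : D₁ → (Z₁ →ₗ[ℂ] PiLp 2 (fun _ : Fin k => X₁))}
    {Φ : D₂ → (Z₂ →ₗ[ℂ] PiLp 2 (fun _ : Fin k => X₂))}
    (hfac : ∀ x y, A x y = LinearMap.adjoint (Υ x) ∘ₗ piBlock (fun _ => Δ x y) ∘ₗ Φ y) :
    relGamma2 A Δ ≤ factorizationCost Υ Φ :=
  iInf_le_of_le k <| iInf_le_of_le Υ <| iInf_le_of_le Φ <| iInf_le_of_le hfac le_rfl

theorem exists_factorizationCost_lt {c : ℝ≥0∞} (h : relGamma2 A Δ < c) :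
    ∃ (k : ℕ) (Υ : D₁ → (Z₁ →ₗ[ℂ] PiLp 2 (fun _ : Fin k => X₁)))
      (Φ : D₂ → (Z₂ →ₗ[ℂ] PiLp 2 (fun _ : Fin k => X₂))),
      (∀ x y, A x y = LinearMap.adjoint (Υ x) ∘ₗ piBlock (fun _ => Δ x y) ∘ₗ Φ y) ∧
        factorizationCost Υ Φ < c := by
  simpa only [relGamma2, factorizationCost, iInf_lt_iff, exists_prop] using h

end RelGamma2

theorem relGamma2_tmul_le_factorizationCost_mul {D₁ D₂ : Type*} [Fintype D₁] [Fintype D₂]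
    {X₁ X₂ X₁' X₂' XX₁ XX₂ Z₁ Z₂ Z₁' Z₂' ZZ₁ ZZ₂ : Type*}
    [NormedAddCommGroup X₁] [InnerProductSpace ℂ X₁] [FiniteDimensional ℂ X₁]
    [NormedAddCommGroup X₂] [InnerProductSpace ℂ X₂] [FiniteDimensional ℂ X₂]
    [NormedAddCommGroup X₁'] [InnerProductSpace ℂ X₁'] [FiniteDimensional ℂ X₁']
    [NormedAddCommGroup X₂'] [InnerProductSpace ℂ X₂'] [FiniteDimensional ℂ X₂']
    [NormedAddCommGroup XX₁] [InnerProductSpace ℂ XX₁] [FiniteDimensional ℂ XX₁]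
    [NormedAddCommGroup XX₂] [InnerProductSpace ℂ XX₂] [FiniteDimensional ℂ XX₂]
    [NormedAddCommGroup Z₁] [InnerProductSpace ℂ Z₁] [FiniteDimensional ℂ Z₁]
    [NormedAddCommGroup Z₂] [InnerProductSpace ℂ Z₂] [FiniteDimensional ℂ Z₂]
    [NormedAddCommGroup Z₁'] [InnerProductSpace ℂ Z₁'] [FiniteDimensional ℂ Z₁']
    [NormedAddCommGroup Z₂'] [InnerProductSpace ℂ Z₂'] [FiniteDimensional ℂ Z₂']
    [NormedAddCommGroup ZZ₁] [InnerProductSpace ℂ ZZ₁] [FiniteDimensional ℂ ZZ₁]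
    [NormedAddCommGroup ZZ₂] [InnerProductSpace ℂ ZZ₂] [FiniteDimensional ℂ ZZ₂]
    (TZ₁ : TensorStructure Z₁ Z₁' ZZ₁) (TZ₂ : TensorStructure Z₂ Z₂' ZZ₂)
    (TX₁ : TensorStructure X₁ X₁' XX₁) (TX₂ : TensorStructure X₂ X₂' XX₂)
    {A : D₁ → D₂ → (Z₂ →ₗ[ℂ] Z₁)} {B : D₁ → D₂ → (Z₂' →ₗ[ℂ] Z₁')}
    {Δ : D₁ → D₂ → (X₂ →ₗ[ℂ] X₁)} {E : D₁ → D₂ → (X₂' →ₗ[ℂ] X₁')}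
    {AB : D₁ → D₂ → (ZZ₂ →ₗ[ℂ] ZZ₁)} {ΔE : D₁ → D₂ → (XX₂ →ₗ[ℂ] XX₁)}
    (hAB : ∀ x y a b, AB x y (TZ₂.t a b) = TZ₁.t (A x y a) (B x y b))
    (hΔE : ∀ x y a b, ΔE x y (TX₂.t a b) = TX₁.t (Δ x y a) (E x y b))
    {k l : ℕ} {Υ : D₁ → (Z₁ →ₗ[ℂ] PiLp 2 (fun _ : Fin k => X₁))}
    {Φ : D₂ → (Z₂ →ₗ[ℂ] PiLp 2 (fun _ : Fin k => X₂))}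
    {Υ' : D₁ → (Z₁' →ₗ[ℂ] PiLp 2 (fun _ : Fin l => X₁'))}
    {Φ' : D₂ → (Z₂' →ₗ[ℂ] PiLp 2 (fun _ : Fin l => X₂'))}
    (hA : ∀ x y, A x y = LinearMap.adjoint (Υ x) ∘ₗ piBlock (fun _ => Δ x y) ∘ₗ Φ y)
    (hB : ∀ x y, B x y = LinearMap.adjoint (Υ' x) ∘ₗ piBlock (fun _ => E x y) ∘ₗ Φ' y) :
    relGamma2 AB ΔE ≤ factorizationCost Υ Φ * factorizationCost Υ' Φ' := by
  let e : Fin (k * l) ≃ Fin k × Fin l := finProdFinEquiv.symm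
  choose F hF hFnorm using fun x => TZ₁.exists_map_tmul_opNorm_le
    (liftIsometry (piPairing TX₁.t e) (inner_piPairing TX₁.t TX₁.inner_t e)) (Υ x) (Υ' x)
  choose G hG hGnorm using fun y => TZ₂.exists_map_tmul_opNorm_le
    (liftIsometry (piPairing TX₂.t e) (inner_piPairing TX₂.t TX₂.inner_t e)) (Φ y) (Φ' y)
  refine le_trans (relGamma2_le_factorizationCost fun x y => ?_)
    (factorizationCost_le_mul hFnorm hGnorm)
  refine eq_adjoint_comp_piBlock_comp_of_tmul TZ₁ TZ₂ TX₁.t TX₁.inner_t TX₂.t e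
    (hAB x y) (hΔE x y) (hA x y) (hB x y) (fun c d => ?_) (fun a b => ?_)
  · rw [hF, liftIsometry_tmul]
  · rw [hG, liftIsometry_tmul]

/-- Tensor product property of the relative `γ₂`-norm:
if `AB_{xy} = A_{xy} ⊗ B_{xy}` and `ΔE_{xy} = Δ_{xy} ⊗ E_{xy}` (with respect to
realizations of the tensor products `Z₂ ⊗ Z₂'`, `Z₁ ⊗ Z₁'`, `X₂ ⊗ X₂'`, `X₁ ⊗ X₁'`),
then `γ₂(A ⊗ B | Δ ⊗ E) ≤ γ₂(A|Δ) · γ₂(B|E)` whenever both factors are finite. -/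
theorem statement8 {D₁ D₂ : Type} [Fintype D₁] [Fintype D₂]
    {X₁ X₂ X₁' X₂' XX₁ XX₂ Z₁ Z₂ Z₁' Z₂' ZZ₁ ZZ₂ : Type}
    [NormedAddCommGroup X₁] [InnerProductSpace ℂ X₁] [FiniteDimensional ℂ X₁]
    [NormedAddCommGroup X₂] [InnerProductSpace ℂ X₂] [FiniteDimensional ℂ X₂]
    [NormedAddCommGroup X₁'] [InnerProductSpace ℂ X₁'] [FiniteDimensional ℂ X₁']
    [NormedAddCommGroup X₂'] [InnerProductSpace ℂ X₂'] [FiniteDimensional ℂ X₂']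
    [NormedAddCommGroup XX₁] [InnerProductSpace ℂ XX₁] [FiniteDimensional ℂ XX₁]
    [NormedAddCommGroup XX₂] [InnerProductSpace ℂ XX₂] [FiniteDimensional ℂ XX₂]
    [NormedAddCommGroup Z₁] [InnerProductSpace ℂ Z₁] [FiniteDimensional ℂ Z₁]
    [NormedAddCommGroup Z₂] [InnerProductSpace ℂ Z₂] [FiniteDimensional ℂ Z₂]
    [NormedAddCommGroup Z₁'] [InnerProductSpace ℂ Z₁'] [FiniteDimensional ℂ Z₁']
    [NormedAddCommGroup Z₂'] [InnerProductSpace ℂ Z₂'] [FiniteDimensional ℂ Z₂']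
    [NormedAddCommGroup ZZ₁] [InnerProductSpace ℂ ZZ₁] [FiniteDimensional ℂ ZZ₁]
    [NormedAddCommGroup ZZ₂] [InnerProductSpace ℂ ZZ₂] [FiniteDimensional ℂ ZZ₂]
    (TZ₁ : TensorStructure Z₁ Z₁' ZZ₁) (TZ₂ : TensorStructure Z₂ Z₂' ZZ₂)
    (TX₁ : TensorStructure X₁ X₁' XX₁) (TX₂ : TensorStructure X₂ X₂' XX₂)
    (A : D₁ → D₂ → (Z₂ →ₗ[ℂ] Z₁)) (B : D₁ → D₂ → (Z₂' →ₗ[ℂ] Z₁'))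
    (Δ : D₁ → D₂ → (X₂ →ₗ[ℂ] X₁)) (E : D₁ → D₂ → (X₂' →ₗ[ℂ] X₁'))
    (AB : D₁ → D₂ → (ZZ₂ →ₗ[ℂ] ZZ₁)) (ΔE : D₁ → D₂ → (XX₂ →ₗ[ℂ] XX₁))
    (hAB : ∀ x y a b, AB x y (TZ₂.t a b) = TZ₁.t (A x y a) (B x y b))
    (hΔE : ∀ x y a b, ΔE x y (TX₂.t a b) = TX₁.t (Δ x y a) (E x y b))
    (hA : relGamma2 A Δ ≠ ⊤) (hB : relGamma2 B E ≠ ⊤) :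
    relGamma2 AB ΔE ≤ relGamma2 A Δ * relGamma2 B E := by
  refine ENNReal.le_mul_of_forall_lt (Or.inr hB) (Or.inl hA) fun a ha b hb => ?_
  obtain ⟨k, Υ, Φ, hfacA, hcostA⟩ := exists_factorizationCost_lt ha
  obtain ⟨l, Υ', Φ', hfacB, hcostB⟩ := exists_factorizationCost_lt hb
  exact (relGamma2_tmul_le_factorizationCost_mul TZ₁ TZ₂ TX₁ TX₂ hAB hΔE hfacA hfacB).trans
    (mul_le_mul' hcostA.le hcostB.le)

end
end
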